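/- arXiv:2307.04369 — 2 statements merged into one kernel-verified Lean document; each statement's English description precedes it below -/
import Mathlib

section
/- The maximum number of triangles in a 7-vertex graph containing no copy of the suspension of P4 is exactly 8; that is, ex(7, K₃, P̂₄) = 8. -/
/-!
Triangles through a vertex `v` are the edges inside its neighbourhood `N(v)`, and `G` contains
`P̂₄` exactly when some `N(v)` spans a path on four vertices. A set of `m` vertices spanning no
such path spans at most `m` edges, and fewer when `3 ∤ m`: a vertex of degree at least `3` is
the centre of a star component, a triangle is a whole component, and otherwise some vertex has
degree at most `1`. Hence `3 t(G) = ∑ᵥ e(N(v))` with `e(N(v)) ≤ deg v`. If some vertex is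
universal this already gives `t(G) ≤ 8`. Otherwise all degrees are at most `5`, each vertex lies
in at most `4` triangles, and in at most `3` unless its degree is `5`; so `t(G) ≥ 9` forces the
degree sequence `5,5,5,5,5,5,4`, and every such graph contains `P̂₄`. Two copies of `K₄` sharing
a vertex have `8` triangles.
-/

/-- `H` is contained in `G` as a (not necessarily induced) subgraph:
there is an injective map of vertices carrying edges of `H` to edges of `G`. -/
def Contains {α β : Type*} (H : SimpleGraph α) (G : SimpleGraph β) : Prop :=
  ∃ f : α → β, Function.Injective f ∧ ∀ ⦃a b⦄, H.Adj a b → G.Adj (f a) (f b)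

/-- The suspension `P̂₄` of the path on 4 vertices: a new apex vertex `none`
is joined to all four vertices of `P₄`. -/
def hatP4 : SimpleGraph (Option (Fin 4)) :=
  SimpleGraph.fromRel (fun a b =>
    (∃ i j, a = some i ∧ b = some j ∧ (SimpleGraph.pathGraph 4).Adj i j) ∨ a = none)

/-- The number of triangles (3-cliques) of a graph. -/
noncomputable def triangleCount {V : Type*} (G : SimpleGraph V) : ℕ :=
  (G.cliqueSet 3).ncard

open Finset

theorem Finset.sum_card_filter_mem_eq_mul_card {α : Type*} [DecidableEq α] {W : Finset α}
    {B : Finset (Finset α)} {k : ℕ} (hB : ∀ s ∈ B, s ⊆ W ∧ #s = k) :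
    ∑ a ∈ W, #{s ∈ B | a ∈ s} = k * #B := by
  have := sum_card_bipartiteAbove_eq_sum_card_bipartiteBelow (· ∈ ·) (s := W) (t := B)
  simp only [bipartiteAbove, bipartiteBelow] at this
  rw [this, sum_congr rfl fun s hs => by
    rw [filter_mem_eq_inter, inter_eq_right.mpr (hB s hs).1, (hB s hs).2], sum_const,
    smul_eq_mul, mul_comm]

theorem triangleCount_eq_card_cliqueFinset {V : Type*} [Fintype V] [DecidableEq V]
    (G : SimpleGraph V) [DecidableRel G.Adj] : triangleCount G = #(G.cliqueFinset 3) := by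
  rw [triangleCount, ← SimpleGraph.coe_cliqueFinset, Set.ncard_coe_finset]

namespace SimpleGraph

section

variable {V : Type*} (G : SimpleGraph V)

-- `a ≠ b`, `b ≠ c` and `c ≠ d` are implied by the adjacencies.
def IsPathFour (a b c d : V) : Prop :=
  G.Adj a b ∧ G.Adj b c ∧ G.Adj c d ∧ a ≠ c ∧ a ≠ d ∧ b ≠ d

def PathFourFreeOn (W : Finset V) : Prop :=
  ∀ a ∈ W, ∀ b ∈ W, ∀ c ∈ W, ∀ d ∈ W, ¬ G.IsPathFour a b c d

instance [DecidableEq V] [DecidableRel G.Adj] (W : Finset V) :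
    Decidable (G.PathFourFreeOn W) := by
  unfold PathFourFreeOn IsPathFour
  infer_instance

variable {G}

theorem PathFourFreeOn.mono {W T : Finset V} (hW : G.PathFourFreeOn W) (hT : T ⊆ W) :
    G.PathFourFreeOn T :=
  fun a ha b hb c hc d hd => hW a (hT ha) b (hT hb) c (hT hc) d (hT hd)

theorem contains_hatP4_iff :
    Contains hatP4 G ↔ ∃ v a b c d,
      G.Adj v a ∧ G.Adj v b ∧ G.Adj v c ∧ G.Adj v d ∧ G.IsPathFour a b c d := by
  constructor
  · rintro ⟨f, hf, hadj⟩
    refine ⟨f none, f (some 0), f (some 1), f (some 2), f (some 3), hadj ?_, hadj ?_, hadj ?_,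
      hadj ?_, hadj ?_, hadj ?_, hadj ?_, hf.ne ?_, hf.ne ?_, hf.ne ?_⟩ <;>
      simp [hatP4, pathGraph_adj]
  · rintro ⟨v, a, b, c, d, hva, hvb, hvc, hvd, hab, hbc, hcd, hac, had, hbd⟩
    refine ⟨fun o => o.elim v ![a, b, c, d], ?_, ?_⟩
    · have := hva.ne; have := hvb.ne; have := hvc.ne; have := hvd.ne
      have := hab.ne; have := hbc.ne; have := hcd.ne
      rintro (_ | i) (_ | j) h
      all_goals (try fin_cases i) <;> (try fin_cases j) <;> simp_all [eq_comm]
    · rintro (_ | i) (_ | j) h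
      all_goals (try fin_cases i) <;> (try fin_cases j) <;>
        simp_all [hatP4, pathGraph_adj, adj_comm]

theorem not_contains_hatP4_iff [Fintype V] [DecidableRel G.Adj] :
    ¬ Contains hatP4 G ↔ ∀ v, G.PathFourFreeOn (G.neighborFinset v) := by
  simp [contains_hatP4_iff, PathFourFreeOn]

theorem PathFourFreeOn.exists_degree_le_one [DecidableRel G.Adj] {W : Finset V}
    (hW : G.PathFourFreeOn W) (htri : G.CliqueFreeOn W 3) (hne : W.Nonempty) :
    ∃ u ∈ W, #{x ∈ W | G.Adj u x} ≤ 1 := by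
  classical
  by_contra! h
  obtain ⟨x, hx⟩ := hne
  obtain ⟨y, hy, z, hz, hyz⟩ := one_lt_card.mp (h x hx)
  simp only [mem_filter] at hy hz
  obtain ⟨t, ht, htx⟩ := exists_mem_ne (h y hy.1) x
  simp only [mem_filter] at ht
  have hzt : z ≠ t := by
    rintro rfl
    refine htri (t := {x, y, z}) ?_ (is3Clique_triple_iff.mpr ⟨hy.2, hz.2, ht.2⟩)
    simp [Set.insert_subset_iff, hx, hy.1, hz.1]
  exact hW z hz.1 x hx y hy.1 t ht.1 ⟨hz.2.symm, hy.2, ht.2, Ne.symm hyz, hzt, htx.symm⟩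

theorem neighborFinset_eq_singleton_of_degree_eq_one [Fintype V] [DecidableRel G.Adj] {u m : V}
    (hu : G.degree u = 1) (hm : G.Adj u m) : G.neighborFinset u = {m} :=
  (eq_of_subset_of_card_le (singleton_subset_iff.mpr ((mem_neighborFinset _ _ _).mpr hm))
    (by rw [card_neighborFinset_eq_degree, hu, card_singleton])).symm

end

section

variable {V : Type*} [Fintype V] [DecidableEq V] (G : SimpleGraph V) [DecidableRel G.Adj]

def edgesIn (W : Finset V) : Finset (Finset V) := {s ∈ G.cliqueFinset 2 | s ⊆ W}

variable {G}

theorem mem_edgesIn {W : Finset V} {s : Finset V} :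
    s ∈ G.edgesIn W ↔ ∃ x ∈ W, ∃ y ∈ W, G.Adj x y ∧ s = {x, y} := by
  simp only [edgesIn, mem_filter, mem_cliqueFinset_iff, isNClique_iff, card_eq_two]
  constructor
  · rintro ⟨⟨hs, x, y, hxy, rfl⟩, hW⟩
    rw [coe_pair, isClique_pair] at hs
    exact ⟨x, hW (mem_insert_self _ _), y, hW (by simp), hs hxy, rfl⟩
  · rintro ⟨x, hx, y, hy, hadj, rfl⟩
    refine ⟨⟨?_, x, y, hadj.ne, rfl⟩, by simp [insert_subset_iff, hx, hy]⟩
    rw [coe_pair, isClique_pair]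
    exact fun _ => hadj

theorem card_cliqueFinset_succ_filter_mem {W : Finset V} {v : V} (hv : v ∈ W) (n : ℕ) :
    #{s ∈ G.cliqueFinset (n + 1) | s ⊆ W ∧ v ∈ s} =
      #{t ∈ G.cliqueFinset n | t ⊆ {x ∈ W | G.Adj v x}} := by
  refine card_nbij' (·.erase v) (insert v) ?_ ?_ ?_ ?_
  · intro s hs
    simp only [coe_filter, mem_cliqueFinset_iff, Set.mem_ofPred_eq] at hs ⊢
    obtain ⟨hcl, hsW, hvs⟩ := hs
    refine ⟨hcl.erase_of_mem hvs, fun x hx => ?_⟩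
    obtain ⟨hxv, hxs⟩ := mem_erase.mp hx
    exact mem_filter.mpr ⟨hsW hxs, hcl.isClique hvs hxs hxv.symm⟩
  · intro t ht
    simp only [coe_filter, mem_cliqueFinset_iff, Set.mem_ofPred_eq] at ht ⊢
    obtain ⟨hcl, htW⟩ := ht
    refine ⟨hcl.insert fun b hb => (mem_filter.mp (htW hb)).2, insert_subset hv fun x hx => ?_,
      mem_insert_self _ _⟩
    exact (mem_filter.mp (htW hx)).1
  · intro s hs
    exact insert_erase (mem_filter.mp hs).2.2
  · intro t ht
    exact erase_insert fun hvt => G.irrefl (mem_filter.mp ((mem_filter.mp ht).2 hvt)).2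

theorem card_filter_cliqueFinset_one_subset (X : Finset V) :
    #{t ∈ G.cliqueFinset 1 | t ⊆ X} = #X := by
  rw [← card_image_of_injective X singleton_injective]
  congr 1
  ext t
  simp only [mem_filter, mem_cliqueFinset_iff, isNClique_one, mem_image]
  constructor
  · rintro ⟨⟨a, rfl⟩, h⟩
    exact ⟨a, singleton_subset_iff.mp h, rfl⟩
  · rintro ⟨a, ha, rfl⟩
    exact ⟨⟨a, rfl⟩, singleton_subset_iff.mpr ha⟩

theorem card_edgesIn_filter_mem {W : Finset V} {u : V} (hu : u ∈ W) :
    #{s ∈ G.edgesIn W | u ∈ s} = #{x ∈ W | G.Adj u x} := by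
  rw [edgesIn, filter_filter, card_cliqueFinset_succ_filter_mem hu 1,
    card_filter_cliqueFinset_one_subset]

theorem sum_degree_edgesIn (W : Finset V) :
    ∑ u ∈ W, #{x ∈ W | G.Adj u x} = 2 * #(G.edgesIn W) := by
  rw [← sum_card_filter_mem_eq_mul_card (W := W) fun s hs => ?_]
  · exact sum_congr rfl fun u hu => (card_edgesIn_filter_mem hu).symm
  obtain ⟨x, hx, y, hy, hadj, rfl⟩ := mem_edgesIn.mp hs
  exact ⟨by simp [insert_subset_iff, hx, hy], card_pair hadj.ne⟩

theorem card_edgesIn_eq_add_erase {W : Finset V} {u : V} (hu : u ∈ W) :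
    #(G.edgesIn W) = #{x ∈ W | G.Adj u x} + #(G.edgesIn (W.erase u)) := by
  rw [← card_edgesIn_filter_mem hu,
    ← card_filter_add_card_filter_not (s := G.edgesIn W) (u ∈ ·)]
  congr 2
  ext s
  simp only [edgesIn, mem_filter, subset_erase]
  tauto

theorem card_edgesIn_eq_add_of_forall_not_adj {W : Finset V} (p : V → Prop) [DecidablePred p]
    (h : ∀ x ∈ W, ∀ y ∈ W, p x → ¬ p y → ¬ G.Adj x y) :
    #(G.edgesIn W) = #(G.edgesIn {x ∈ W | p x}) + #(G.edgesIn {x ∈ W | ¬ p x}) := by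
  rw [← card_union_of_disjoint]
  · congr 1
    ext s
    simp only [mem_union, mem_edgesIn, mem_filter]
    constructor
    · rintro ⟨x, hx, y, hy, hadj, rfl⟩
      by_cases hpx : p x <;> by_cases hpy : p y
      · exact .inl ⟨x, ⟨hx, hpx⟩, y, ⟨hy, hpy⟩, hadj, rfl⟩
      · exact absurd hadj (h x hx y hy hpx hpy)
      · exact absurd hadj.symm (h y hy x hx hpy hpx)
      · exact .inr ⟨x, ⟨hx, hpx⟩, y, ⟨hy, hpy⟩, hadj, rfl⟩
    · rintro (⟨x, ⟨hx, -⟩, y, ⟨hy, -⟩, hadj, rfl⟩ | ⟨x, ⟨hx, -⟩, y, ⟨hy, -⟩, hadj, rfl⟩)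
      all_goals exact ⟨x, hx, y, hy, hadj, rfl⟩
  · rw [Finset.disjoint_left]
    intro s hs hs'
    obtain ⟨x, hx, y, -, -, rfl⟩ := mem_edgesIn.mp hs
    exact (mem_filter.mp ((mem_filter.mp hs').2 (mem_insert_self x _))).2 (mem_filter.mp hx).2

theorem card_edgesIn_le_choose (W : Finset V) : #(G.edgesIn W) ≤ (#W).choose 2 := by
  rw [← card_powersetCard]
  refine card_le_card fun s hs => ?_
  simp only [edgesIn, mem_filter, mem_cliqueFinset_iff] at hs
  exact mem_powersetCard.mpr ⟨hs.2, hs.1.card_eq⟩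

theorem card_edgesIn_lt_card_of_degree_le_two {W : Finset V}
    (hdeg : ∀ v ∈ W, #{x ∈ W | G.Adj v x} ≤ 2) {u : V} (hu : u ∈ W)
    (hu₁ : #{x ∈ W | G.Adj u x} ≤ 1) : #(G.edgesIn W) < #W := by
  have hsum := sum_degree_edgesIn (G := G) W
  rw [← add_sum_erase _ _ hu] at hsum
  have hrest := sum_le_card_nsmul (W.erase u) _ 2 fun v hv => hdeg v (mem_of_mem_erase hv)
  rw [card_erase_of_mem hu, smul_eq_mul] at hrest
  have := card_pos.mpr ⟨u, hu⟩
  omega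

theorem PathFourFreeOn.card_edgesIn_eq_of_three_le {W : Finset V} (hW : G.PathFourFreeOn W)
    {u : V} (hu : u ∈ W) (hdeg : 3 ≤ #{x ∈ W | G.Adj u x}) :
    #(G.edgesIn W) = #{x ∈ W | G.Adj u x} + #(G.edgesIn {x ∈ W.erase u | ¬ G.Adj u x}) := by
  -- Such an edge `x y` would extend to the path `y x u z` through a third neighbour `z` of `u`.
  have hN : ∀ x ∈ W, G.Adj u x → ∀ y ∈ W, y ≠ u → ¬ G.Adj x y := by
    intro x hx hux y hy hyu hxy
    have : 0 < #({x ∈ W | G.Adj u x} \ {x, y}) := by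
      grw [← le_card_sdiff, card_le_two]
      omega
    obtain ⟨z, hz⟩ := card_pos.mp this
    simp only [mem_sdiff, mem_filter, mem_insert, mem_singleton, not_or] at hz
    obtain ⟨⟨hzW, huz⟩, hzx, hzy⟩ := hz
    exact hW y hy x hx u hu z hzW ⟨hxy.symm, hux.symm, huz, hyu, Ne.symm hzy, Ne.symm hzx⟩
  rw [card_edgesIn_eq_add_erase hu,
    card_edgesIn_eq_add_of_forall_not_adj (W := W.erase u) (G.Adj u) fun x hx y hy hux _ =>
      hN x (mem_of_mem_erase hx) hux y (mem_of_mem_erase hy) (ne_of_mem_erase hy)]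
  suffices G.edgesIn {x ∈ W.erase u | G.Adj u x} = ∅ by rw [this, card_empty, zero_add]
  refine eq_empty_iff_forall_notMem.mpr fun s hs => ?_
  obtain ⟨x, hx, y, hy, hxy, -⟩ := mem_edgesIn.mp hs
  simp only [mem_filter, mem_erase] at hx hy
  exact hN x hx.1.2 hx.2 y hy.1.2 hy.1.1 hxy

theorem card_edgesIn_le_of_isNClique {W T : Finset V} (hT : G.IsNClique 3 T) (hTW : T ⊆ W)
    (hdeg : ∀ v ∈ W, #{x ∈ W | G.Adj v x} ≤ 2) :
    #(G.edgesIn W) ≤ 3 + #(G.edgesIn (W \ T)) := by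
  have hclosed : ∀ a ∈ T, ∀ b ∈ W, G.Adj a b → b ∈ T := by
    intro a ha b hb hab
    have hsub : T.erase a ⊆ {x ∈ W | G.Adj a x} := fun x hx =>
      mem_filter.mpr ⟨hTW (mem_of_mem_erase hx),
        hT.isClique ha (mem_of_mem_erase hx) (ne_of_mem_erase hx).symm⟩
    have heq := eq_of_subset_of_card_le hsub
      (by rw [card_erase_of_mem ha, hT.card_eq]; exact hdeg a (hTW ha))
    exact mem_of_mem_erase (heq ▸ mem_filter.mpr ⟨hb, hab⟩)
  rw [card_edgesIn_eq_add_of_forall_not_adj (· ∈ T) fun x _ y hy hx hy' hxy =>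
    hy' (hclosed x hx y hy hxy), ← filter_notMem_eq_sdiff]
  grw [card_edgesIn_le_choose {x ∈ W | x ∈ T}, filter_mem_eq_inter, inter_eq_right.mpr hTW,
    hT.card_eq]
  rfl

theorem PathFourFreeOn.card_edgesIn_le {W : Finset V} (hW : G.PathFourFreeOn W) :
    #(G.edgesIn W) ≤ #W ∧ (¬ 3 ∣ #W → #(G.edgesIn W) < #W) := by
  induction hn : #W using Nat.strong_induction_on generalizing W with
  | _ n ih =>
  by_cases hhub : ∃ u ∈ W, 3 ≤ #{x ∈ W | G.Adj u x}
  · obtain ⟨u, hu, hdeg⟩ := hhub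
    have hcard := card_filter_add_card_filter_not (s := W.erase u) (G.Adj u)
    rw [filter_erase, erase_eq_of_notMem (s := {x ∈ W | G.Adj u x}) (by simp),
      card_erase_of_mem hu] at hcard
    have hR := (ih #{x ∈ W.erase u | ¬G.Adj u x} (by omega)
      (hW.mono ((filter_subset _ _).trans (erase_subset u W))) rfl).1
    rw [hW.card_edgesIn_eq_of_three_le hu hdeg]
    omega
  push Not at hhub
  have hdeg : ∀ v ∈ W, #{x ∈ W | G.Adj v x} ≤ 2 := fun v hv => by have := hhub v hv; omega
  by_cases htri : G.CliqueFreeOn W 3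
  · rcases W.eq_empty_or_nonempty with rfl | hne
    · have := card_edgesIn_le_choose (G := G) (∅ : Finset V)
      rw [card_empty, Nat.choose_zero_succ] at this
      rw [← hn, card_empty]
      omega
    obtain ⟨u, hu, hu₁⟩ := hW.exists_degree_le_one htri hne
    have := card_edgesIn_lt_card_of_degree_le_two hdeg hu hu₁
    omega
  · obtain ⟨T, hTW, hT⟩ : ∃ T : Finset V, T ⊆ W ∧ G.IsNClique 3 T := by
      simpa [CliqueFreeOn] using htri
    have hcard : #(W \ T) = n - 3 := by rw [card_sdiff_of_subset hTW, hT.card_eq, hn]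
    have hle := card_edgesIn_le_of_isNClique hT hTW hdeg
    have h3 : 3 ≤ n := hn ▸ hT.card_eq ▸ card_le_card hTW
    have := ih _ (by omega) (hW.mono sdiff_subset) hcard
    omega

theorem card_filter_mem_cliqueFinset_three (v : V) :
    #{s ∈ G.cliqueFinset 3 | v ∈ s} = #(G.edgesIn (G.neighborFinset v)) := by
  have := card_cliqueFinset_succ_filter_mem (G := G) (mem_univ v) 2
  simpa [neighborFinset_eq_filter, edgesIn] using this

theorem sum_card_filter_mem_cliqueFinset_three :
    ∑ v, #{s ∈ G.cliqueFinset 3 | v ∈ s} = 3 * #(G.cliqueFinset 3) :=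
  sum_card_filter_mem_eq_mul_card fun s hs =>
    ⟨subset_univ s, (mem_cliqueFinset_iff.mp hs).card_eq⟩

theorem card_filter_mem_cliqueFinset_three_le {v : V}
    (hv : G.PathFourFreeOn (G.neighborFinset v)) :
    #{s ∈ G.cliqueFinset 3 | v ∈ s} ≤ G.degree v ∧
      (¬ 3 ∣ G.degree v → #{s ∈ G.cliqueFinset 3 | v ∈ s} < G.degree v) := by
  rw [card_filter_mem_cliqueFinset_three, ← card_neighborFinset_eq_degree]
  exact hv.card_edgesIn_le

theorem three_mul_card_cliqueFinset_three_le_of_isUniversal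
    (hG : ∀ v, G.PathFourFreeOn (G.neighborFinset v)) {v : V} (hv : G.IsUniversal v) :
    3 * #(G.cliqueFinset 3) ≤ 4 * (Fintype.card V - 1) := by
  have hN : G.neighborFinset v = univ.erase v := (G.neighborFinset_eq_erase_univ v).mpr hv
  have hdeg : G.degree v = Fintype.card V - 1 := (G.degree_eq_card_sub_one v).mpr hv
  have hedges : #(G.edgesIn univ) = G.degree v + #{s ∈ G.cliqueFinset 3 | v ∈ s} := by
    rw [card_edgesIn_eq_add_erase (mem_univ v), card_filter_mem_cliqueFinset_three, hN,
      ← card_neighborFinset_eq_degree, neighborFinset_eq_filter]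
  -- `∑_{u ≠ v} deg u = 2 e(V) - deg v = deg v + 2 e(N(v))`, and `u` lies in `≤ deg u` triangles.
  have hsum := sum_degree_edgesIn (G := G) univ
  simp only [← neighborFinset_eq_filter, card_neighborFinset_eq_degree] at hsum
  rw [← add_sum_erase _ _ (mem_univ v)] at hsum
  rw [← sum_card_filter_mem_cliqueFinset_three, ← add_sum_erase _ _ (mem_univ v)]
  have hrest := sum_le_sum fun u (_ : u ∈ univ.erase v) =>
    (card_filter_mem_cliqueFinset_three_le (hG u)).1
  have hv' := (card_filter_mem_cliqueFinset_three_le (hG v)).1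
  omega

theorem card_filter_mem_cliqueFinset_three_le_of_not_isUniversal (hV : Fintype.card V = 7)
    {v : V} (hG : G.PathFourFreeOn (G.neighborFinset v)) (hv : ¬ G.IsUniversal v) :
    #{s ∈ G.cliqueFinset 3 | v ∈ s} ≤ if G.degree v = 5 then 4 else 3 := by
  have hdeg := (G.degree_lt_card_sub_one v).mpr hv
  have := card_filter_mem_cliqueFinset_three_le hG
  rw [hV] at hdeg
  split_ifs <;> interval_cases G.degree v <;> omega

theorem exists_degree_eq_four_of_nine_le (hV : Fintype.card V = 7)
    (hG : ∀ v, G.PathFourFreeOn (G.neighborFinset v)) (hnu : ∀ v, ¬ G.IsUniversal v)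
    (ht : 9 ≤ #(G.cliqueFinset 3)) : ∃ w, G.degree w = 4 ∧ ∀ u ≠ w, G.degree u = 5 := by
  have hsum := sum_card_filter_mem_cliqueFinset_three (G := G)
  have hbound := sum_le_sum fun v (_ : v ∈ univ) =>
    card_filter_mem_cliqueFinset_three_le_of_not_isUniversal hV (hG v) (hnu v)
  have hsplit := card_filter_add_card_filter_not (s := univ) (G.degree · = 5)
  rw [sum_ite, sum_const, sum_const, smul_eq_mul, smul_eq_mul] at hbound
  rw [card_univ, hV] at hsplit
  have hpar := G.sum_degrees_eq_twice_card_edges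
  obtain ⟨w, hw⟩ : ∃ w, G.degree w ≠ 5 := by
    by_contra! h
    simp [h, hV] at hpar
    omega
  have hunique : ∀ u ≠ w, G.degree u = 5 := fun u hu => by
    by_contra h
    have hle : #{x | ¬ G.degree x = 5} ≤ 1 := by omega
    exact hu (card_le_one.mp hle u (by simpa using h) w (by simpa using hw))
  refine ⟨w, ?_, hunique⟩
  rw [← add_sum_erase _ _ (mem_univ w),
    sum_congr rfl fun u hu => hunique u (ne_of_mem_erase hu), sum_const,
    card_erase_of_mem (mem_univ w), card_univ, hV, smul_eq_mul] at hpar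
  rw [← add_sum_erase _ _ (mem_univ w)] at hsum
  have hrest := sum_le_sum fun u (_ : u ∈ univ.erase w) =>
    (card_filter_mem_cliqueFinset_three_le_of_not_isUniversal hV (hG u) (hnu u)).trans
      (by split_ifs <;> norm_num : (if G.degree u = 5 then 4 else 3) ≤ 4)
  rw [sum_const, card_erase_of_mem (mem_univ w), card_univ, hV, smul_eq_mul] at hrest
  have := card_filter_mem_cliqueFinset_three_le (hG w)
  have := (G.degree_lt_card_sub_one w).mpr (hnu w)
  rw [hV] at this
  interval_cases h : G.degree w <;> omega

theorem exists_not_pathFourFreeOn_of_degree (hV : Fintype.card V = 7) {w : V}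
    (hw : G.degree w = 4) (hu : ∀ u ≠ w, G.degree u = 5) :
    ∃ v, ¬ G.PathFourFreeOn (G.neighborFinset v) := by
  have hcompl : ∀ u, Gᶜ.degree u = 6 - G.degree u := fun u => by rw [degree_compl, hV]
  have hsingle : ∀ u ≠ w, ∀ m, Gᶜ.Adj u m → Gᶜ.neighborFinset u = {m} := fun u hu' _ =>
    neighborFinset_eq_singleton_of_degree_eq_one (by rw [hcompl, hu u hu'])
  have hadj : ∀ x y, x ≠ y → y ∉ Gᶜ.neighborFinset x → G.Adj x y := fun x y hxy hy => by
    simpa [hxy] using hy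
  -- `a`, `b` are the non-neighbours of `w` and `d` is the non-neighbour of `c`; then the path
  -- `w e a b` lies in the neighbourhood of `c`.
  obtain ⟨a, b, hab, hNw⟩ := (card_eq_two (s := Gᶜ.neighborFinset w)).mp
    (by rw [card_neighborFinset_eq_degree, hcompl, hw])
  have hwa : Gᶜ.Adj w a := (mem_neighborFinset _ _ _).mp (by simp [hNw])
  have hwb : Gᶜ.Adj w b := (mem_neighborFinset _ _ _).mp (by simp [hNw])
  have hNa := hsingle a hwa.ne.symm w hwa.symm
  have hNb := hsingle b hwb.ne.symm w hwb.symm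
  obtain ⟨c, -, hc⟩ := exists_mem_notMem_of_card_lt_card (t := univ) (s := {w, a, b})
    (by grw [card_le_three, card_univ, hV]; norm_num)
  simp only [mem_insert, mem_singleton, not_or] at hc
  obtain ⟨hcw, hca, hcb⟩ := hc
  obtain ⟨d, hNc⟩ := (card_eq_one (s := Gᶜ.neighborFinset c)).mp
    (by rw [card_neighborFinset_eq_degree, hcompl, hu c hcw])
  have hdN : c ∈ Gᶜ.neighborFinset d :=
    (mem_neighborFinset _ _ _).mpr ((mem_neighborFinset _ _ _).mp (by simp [hNc])).symm
  have hdw : d ≠ w := by rintro rfl; simp [hNw, hca, hcb] at hdN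
  have hda : d ≠ a := by rintro rfl; simp [hNa, hcw] at hdN
  have hdb : d ≠ b := by rintro rfl; simp [hNb, hcw] at hdN
  obtain ⟨e, -, he⟩ := exists_mem_notMem_of_card_lt_card (t := univ) (s := {w, a, b, c, d})
    (by grw [card_le_five, card_univ, hV]; norm_num)
  simp only [mem_insert, mem_singleton, not_or] at he
  obtain ⟨hew, hea, heb, hec, hed⟩ := he
  refine ⟨c, fun h => h w ?_ e ?_ a ?_ b ?_
    ⟨hadj w e (Ne.symm hew) (by simp [hNw, hea, heb]),
      (hadj a e (Ne.symm hea) (by simp [hNa, hew])).symm,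
      hadj a b hab (by simp [hNa, hwb.ne.symm]), hwa.ne, hwb.ne, heb⟩⟩ <;>
    rw [mem_neighborFinset]
  · exact hadj c w hcw (by simp [hNc, hdw.symm])
  · exact hadj c e (Ne.symm hec) (by simp [hNc, hed])
  · exact hadj c a hca (by simp [hNc, hda.symm])
  · exact hadj c b hcb (by simp [hNc, hdb.symm])

end

end SimpleGraph

open SimpleGraph

/-- Two copies of `K₄`, on `{0, 1, 2, 3}` and on `{0, 4, 5, 6}`. -/
def twoK4 : SimpleGraph (Fin 7) where
  Adj i j := i ≠ j ∧ (i.val < 4 ∧ j.val < 4 ∨ (i = 0 ∨ 4 ≤ i.val) ∧ (j = 0 ∨ 4 ≤ j.val))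
  symm := ⟨fun _ _ h => ⟨h.1.symm, by tauto⟩⟩
  loopless := ⟨fun _ h => h.1 rfl⟩

instance : DecidableRel twoK4.Adj := fun _ _ => by unfold twoK4; infer_instance

/-- `ex(7, K₃, P̂₄) = 8`. -/
theorem stmt_4 :
    IsGreatest {t : ℕ | ∃ G : SimpleGraph (Fin 7),
      ¬ Contains hatP4 G ∧ triangleCount G = t} 8 := by
  refine ⟨⟨twoK4, not_contains_hatP4_iff.mpr (by decide), by
    rw [triangleCount_eq_card_cliqueFinset]; decide⟩, ?_⟩
  rintro t ⟨G, hG, rfl⟩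
  classical
  have hfree := not_contains_hatP4_iff.mp hG
  rw [triangleCount_eq_card_cliqueFinset]
  by_cases huniv : ∃ v, G.IsUniversal v
  · obtain ⟨v, hv⟩ := huniv
    have := three_mul_card_cliqueFinset_three_le_of_isUniversal hfree hv
    simp only [Fintype.card_fin] at this
    omega
  push Not at huniv
  by_contra! ht
  obtain ⟨w, hw, hu⟩ := exists_degree_eq_four_of_nine_le (Fintype.card_fin 7) hfree huniv ht
  obtain ⟨v, hv⟩ := exists_not_pathFourFreeOn_of_degree (Fintype.card_fin 7) hw hu
  exact hv (hfree v)
end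

section
/- Let G be a graph that is P̂₄-free and contains no K₄ as a subgraph. Then there exists a triangle-free spanning subgraph G′ of G whose number of edges is at least 2·t(G), where t(G) is the number of triangles of G. -/
/-!
Call an edge of a triangle `t` private if `t` is the only triangle containing it. In a graph
without `P̂₄` and `K₄`, two edges `ab`, `ac` of a triangle `abc` cannot both fail to be private:
a common neighbour `c' ≠ c` of `a, b` and a common neighbour `b' ≠ b` of `a, c` span a `K₄`
together with `a, b, c` if `c' = b'`, and otherwise `a` is the apex of a `P̂₄` over the path
`c' b c b'`. So every triangle has two private edges. Choosing two of them for each triangle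
gives `2 · t(G)` distinct edges, and the graph they span is triangle-free, since each of its
triangles would need all three of its edges among the two chosen for it.
-/

open SimpleGraph Finset

lemma contains_iff_isContained {α β : Type*} {H : SimpleGraph α} {G : SimpleGraph β} :
    Contains H G ↔ H ⊑ G :=
  ⟨fun ⟨f, hf, hadj⟩ => ⟨⟨⟨f, fun h => hadj h⟩, hf⟩⟩,
    fun ⟨f⟩ => ⟨f, f.injective, fun _ _ h => f.toHom.map_adj h⟩⟩

lemma not_contains_top_iff_cliqueFree {V : Type*} {G : SimpleGraph V} {n : ℕ} :
    ¬ Contains (⊤ : SimpleGraph (Fin n)) G ↔ G.CliqueFree n := by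
  rw [contains_iff_isContained, ← not_cliqueFree_iff_top_isContained, not_not]

section

variable {V : Type*} {G : SimpleGraph V}

lemma contains_hatP4 (x : V) {p : Fin 4 → V} (hp : Function.Injective p)
    (hpath : ∀ ⦃i j⦄, (pathGraph 4).Adj i j → G.Adj (p i) (p j)) (hx : ∀ i, G.Adj x (p i)) :
    Contains hatP4 G := by
  refine ⟨fun o => o.elim x p, ?_, ?_⟩
  · rintro (_ | i) (_ | j) h
    · rfl
    · exact absurd h (hx j).ne
    · exact absurd h.symm (hx i).ne
    · exact congrArg some (hp h)
  · rintro (_ | i) (_ | j) h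
    · exact absurd rfl h.ne
    · exact hx j
    · exact (hx i).symm
    · simp only [hatP4, fromRel_adj, Option.some.injEq, exists_and_left, exists_eq_left',
        reduceCtorEq, or_false] at h
      exact hpath (h.2.elim id (·.symm))

lemma commonNeighbors_subset_or (hP4 : ¬ Contains hatP4 G) (hK4 : G.CliqueFree 4) {a b c : V}
    (hab : G.Adj a b) (hac : G.Adj a c) (hbc : G.Adj b c) :
    G.commonNeighbors a b ⊆ {c} ∨ G.commonNeighbors a c ⊆ {b} := by
  classical
  by_contra! h
  obtain ⟨c', hc', hc'c⟩ := Set.not_subset.mp h.1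
  obtain ⟨b', hb', hb'b⟩ := Set.not_subset.mp h.2
  obtain ⟨hac', hbc'⟩ := G.mem_commonNeighbors.mp hc'
  obtain ⟨hab', hcb'⟩ := G.mem_commonNeighbors.mp hb'
  rw [Set.mem_singleton_iff] at hc'c hb'b
  by_cases hc'b' : c' = b'
  · subst hc'b'
    refine hK4 {c', a, b, c} ((is3Clique_triple_iff.mpr ⟨hab, hac, hbc⟩).insert ?_)
    simp only [mem_insert, mem_singleton, forall_eq_or_imp, forall_eq]
    exact ⟨hac'.symm, hbc'.symm, hcb'.symm⟩
  refine hP4 (contains_hatP4 a (p := ![c', b, c, b']) ?_ ?_ ?_)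
  · intro i j hij
    fin_cases i <;> fin_cases j <;> simp_all [hbc.ne', hbc'.ne, hcb'.ne]
  · intro i j hij
    fin_cases i <;> fin_cases j <;> simp_all [pathGraph_adj, hbc.symm, hbc'.symm, hcb'.symm]
  · intro i
    fin_cases i <;> assumption

def IsPrivateEdge (G : SimpleGraph V) (t : Finset V) (e : Sym2 V) : Prop :=
  ∀ t' ∈ G.cliqueSet 3, e ∈ t'.sym2 → t' = t

def HasTwoPrivateEdges (G : SimpleGraph V) (t : Finset V) : Prop :=
  ∃ s : Finset (Sym2 V), #s = 2 ∧ ↑s ⊆ G.edgeSet ∧ s ⊆ t.sym2 ∧ ∀ e ∈ s, IsPrivateEdge G t e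

lemma isPrivateEdge_of_commonNeighbors_subset [DecidableEq V] {a b c : V} (hab : G.Adj a b)
    (hac : G.Adj a c) (hbc : G.Adj b c) (h : G.commonNeighbors a b ⊆ {c}) :
    IsPrivateEdge G {a, b, c} s(a, b) := by
  intro t ht hab_t
  rw [mem_cliqueSet_iff] at ht
  rw [mk_mem_sym2_iff] at hab_t
  have hsub : t ⊆ {a, b, c} := by
    intro v hv
    by_cases hva : v = a; · simp [hva]
    by_cases hvb : v = b; · simp [hvb]
    have : v ∈ G.commonNeighbors a b :=
      ⟨ht.isClique hab_t.1 hv (Ne.symm hva), ht.isClique hab_t.2 hv (Ne.symm hvb)⟩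
    rw [Set.mem_singleton_iff.mp (h this)]
    simp
  exact eq_of_subset_of_card_le hsub
    (by rw [ht.card_eq, (is3Clique_triple_iff.mpr ⟨hab, hac, hbc⟩).card_eq])

lemma hasTwoPrivateEdges_of_commonNeighbors_subset [DecidableEq V] {a b c : V}
    (hab : G.Adj a b) (hac : G.Adj a c) (hbc : G.Adj b c) (h₁ : G.commonNeighbors a b ⊆ {c})
    (h₂ : G.commonNeighbors a c ⊆ {b}) :
    HasTwoPrivateEdges G {a, b, c} := by
  refine ⟨{s(a, b), s(a, c)}, card_pair ?_, ?_, ?_, ?_⟩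
  · simp [hbc.ne, hab.ne']
  · simp [Set.insert_subset_iff, hab, hac]
  · simp [insert_subset_iff]
  · have hac_priv := isPrivateEdge_of_commonNeighbors_subset hac hab hbc.symm h₂
    rw [pair_comm] at hac_priv
    simpa [hac_priv] using isPrivateEdge_of_commonNeighbors_subset hab hac hbc h₁

lemma hasTwoPrivateEdges_of_mem_cliqueSet (hP4 : ¬ Contains hatP4 G) (hK4 : G.CliqueFree 4)
    {t : Finset V} (ht : t ∈ G.cliqueSet 3) : HasTwoPrivateEdges G t := by
  classical
  obtain ⟨a, b, c, hab, hac, hbc, rfl⟩ := is3Clique_iff.mp (mem_cliqueSet_iff.mp ht)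
  have hbac : ({b, a, c} : Finset V) = {a, b, c} := insert_comm b a {c}
  have hcab : ({c, a, b} : Finset V) = {a, b, c} := by rw [insert_comm, pair_comm, insert_comm]
  rcases commonNeighbors_subset_or hP4 hK4 hab hac hbc with hcn_ab | hcn_ac
  · rcases commonNeighbors_subset_or hP4 hK4 hac.symm hbc.symm hab with hcn_ca | hcn_cb
    · exact hasTwoPrivateEdges_of_commonNeighbors_subset hab hac hbc hcn_ab
        (by rwa [commonNeighbors_symm])
    · rw [← hbac]
      exact hasTwoPrivateEdges_of_commonNeighbors_subset hab.symm hbc hac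
        (by rwa [commonNeighbors_symm]) (by rwa [commonNeighbors_symm])
  · rcases commonNeighbors_subset_or hP4 hK4 hab.symm hbc hac with hcn_ba | hcn_bc
    · exact hasTwoPrivateEdges_of_commonNeighbors_subset hab hac hbc
        (by rwa [commonNeighbors_symm]) hcn_ac
    · rw [← hcab]
      exact hasTwoPrivateEdges_of_commonNeighbors_subset hac.symm hbc.symm hab
        (by rwa [commonNeighbors_symm]) (by rwa [commonNeighbors_symm])

lemma three_le_card_of_is3Clique [DecidableEq V] {t : Finset V} (ht : G.IsNClique 3 t)
    {s : Finset (Sym2 V)} (hs : ∀ e ∈ G.edgeSet, e ∈ t.sym2 → e ∈ s) : 3 ≤ #s := by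
  obtain ⟨a, b, c, hab, hac, hbc, rfl⟩ := is3Clique_iff.mp ht
  have hsub : ({s(a, b), s(a, c), s(b, c)} : Finset (Sym2 V)) ⊆ s := by
    simp only [insert_subset_iff, singleton_subset_iff]
    exact ⟨hs _ hab (by simp), hs _ hac (by simp), hs _ hbc (by simp)⟩
  have hcard : #({s(a, b), s(a, c), s(b, c)} : Finset (Sym2 V)) = 3 := by
    refine card_eq_three.mpr ⟨_, _, _, ?_, ?_, ?_, rfl⟩ <;>
      simp [hab.ne, hac.ne, hbc.ne, hab.ne', hbc.ne']
  exact hcard ▸ card_le_card hsub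

theorem exists_cliqueFree_three_two_mul_triangleCount_le [Fintype V]
    (h : ∀ t ∈ G.cliqueSet 3, HasTwoPrivateEdges G t) :
    ∃ G' ≤ G, G'.CliqueFree 3 ∧ 2 * triangleCount G ≤ G'.edgeSet.ncard := by
  classical
  set T := G.cliqueFinset 3
  have hT {t : Finset V} : t ∈ T ↔ t ∈ G.cliqueSet 3 := by
    rw [mem_cliqueFinset_iff, mem_cliqueSet_iff]
  choose! s hcard hedge hsym hpriv using fun t (ht : t ∈ T) => h t (hT.mp ht)
  set S := T.biUnion s
  have hS : (S : Set (Sym2 V)) ⊆ G.edgeSet := by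
    simpa [S, Set.iUnion_subset_iff] using hedge
  have hdisj : (T : Set (Finset V)).PairwiseDisjoint s := by
    intro t ht u hu htu
    refine disjoint_left.mpr fun e het heu => htu ?_
    exact hpriv u hu e heu t (hT.mp ht) (hsym t ht het)
  have hle : fromEdgeSet S ≤ G := (fromEdgeSet_le G).mpr (Set.sdiff_subset.trans hS)
  refine ⟨fromEdgeSet S, hle, ?_, ?_⟩
  · intro t ht
    have htT : t ∈ T := hT.mpr (ht.mono hle)
    have hthree := three_le_card_of_is3Clique ht (s := s t) fun e he het => by
      obtain ⟨u, hu, heu⟩ :=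
        mem_biUnion.mp (Set.sdiff_subset (edgeSet_fromEdgeSet (S : Set (Sym2 V)) ▸ he))
      rwa [hpriv u hu e heu t (hT.mp htT) het]
    have htwo := hcard t htT
    omega
  · have hE : (fromEdgeSet (S : Set (Sym2 V))).edgeSet = S := (edgeSet_eq_iff _ _).mpr
      ⟨rfl, Set.subset_compl_iff_disjoint_right.mp (hS.trans G.edgeSet_subset_compl_diagSet)⟩
    rw [hE, Set.ncard_coe_finset, card_biUnion hdisj, sum_congr rfl hcard, sum_const,
      smul_eq_mul, triangleCount, ← coe_cliqueFinset, Set.ncard_coe_finset, mul_comm]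

end

/-- If `G` is `P̂₄`-free and `K₄`-free, then `G` has a triangle-free spanning
subgraph `G'` with at least `2 · t(G)` edges. -/
theorem stmt_16 {V : Type} [Fintype V] (G : SimpleGraph V)
    (hP4 : ¬ Contains hatP4 G) (hK4 : ¬ Contains (⊤ : SimpleGraph (Fin 4)) G) :
    ∃ G' : SimpleGraph V, G' ≤ G ∧ G'.CliqueFree 3 ∧
      2 * triangleCount G ≤ G'.edgeSet.ncard :=
  exists_cliqueFree_three_two_mul_triangleCount_le fun _ ht =>
    hasTwoPrivateEdges_of_mem_cliqueSet hP4 (not_contains_top_iff_cliqueFree.mp hK4) ht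
end
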